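/- arXiv:2407.00419 — 2 statements merged into one kernel-verified Lean document; each statement's English description precedes it below -/
import Mathlib

section
/- Fix types θ1, θ2 and a Nash equilibrium (σ1, σ2) of the bi-matrix stage game with these types, and suppose that at every stage r = 1, …, T the two players sample their actions a_r ∼ σ1 and b_r ∼ σ2 independently of each other and of all previous stages (i.i.d. Nash play). Then for every δ ∈ (0,1), with probability at least 1−δ, simultaneously for every t ≤ T: max_{a∈[N]} ∑_{r=1}^t (G(a, σ2; θ1) − G(σ1, b_r; θ1)) ≤ √(2T ln(2/δ)) and max_{a∈[N]} ∑_{r=1}^t (G(a, σ1; θ2) − G(σ2, a_r; θ2)) ≤ √(2T ln(2/δ)); that is, both players' expected external regrets (with the benchmark action evaluated against the opponent's fixed mixed strategy) stay below √(2T ln(2/δ)) at all stages. -/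
open Finset Real

section AuxRegret
open scoped Classical

variable {α : Type*} [Fintype α]

/-- Partial sum of `y` along the first `t` coordinates of `h`. -/
noncomputable def Msum (T : ℕ) (y : α → ℝ) (t : ℕ) (h : Fin T → α) : ℝ :=
  ∑ r : Fin T, if (r : ℕ) < t then y (h r) else 0

/-- Splitting `Fin (T+1) → α` into the first `T` coordinates and the last one. -/
def snocEquiv (T : ℕ) (α : Type*) : (Fin T → α) × α ≃ (Fin (T+1) → α) where
  toFun p := Fin.snoc p.1 p.2
  invFun h := (fun i => h i.castSucc, h (Fin.last T))
  left_inv p := by simp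
  right_inv h := by
    funext i
    refine Fin.lastCases ?_ ?_ i <;> simp

lemma snoc_sum (T : ℕ) (f : (Fin (T+1) → α) → ℝ) :
    ∑ h : Fin (T+1) → α, f h = ∑ h : Fin T → α, ∑ x : α, f (Fin.snoc h x) := by
  rw [← Equiv.sum_comp (snocEquiv T α) f, Fintype.sum_prod_type]
  rfl

lemma prod_snoc (T : ℕ) (ν : α → ℝ) (h : Fin T → α) (x : α) :
    ∏ t : Fin (T+1), ν ((Fin.snoc h x : Fin (T+1) → α) t) = (∏ t : Fin T, ν (h t)) * ν x := by
  rw [Fin.prod_univ_castSucc]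
  simp

lemma Msum_snoc_le (T : ℕ) (y : α → ℝ) (t : ℕ) (ht : t ≤ T) (h : Fin T → α) (x : α) :
    Msum (T+1) y t (Fin.snoc h x) = Msum T y t h := by
  unfold Msum
  rw [Fin.sum_univ_castSucc]
  simp only [Fin.snoc_castSucc, Fin.snoc_last, Fin.coe_castSucc, Fin.val_last]
  rw [if_neg (by omega)]
  ring

lemma Msum_top (T : ℕ) (y : α → ℝ) (t : ℕ) (ht : T ≤ t) (h : Fin T → α) :
    Msum T y t h = ∑ r : Fin T, y (h r) := by
  unfold Msum
  exact Finset.sum_congr rfl fun r _ => if_pos (lt_of_lt_of_le r.isLt ht)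

lemma Msum_snoc_succ (T : ℕ) (y : α → ℝ) (h : Fin T → α) (x : α) :
    Msum (T+1) y (T+1) (Fin.snoc h x) = Msum T y T h + y x := by
  rw [Msum_top (T+1) y (T+1) le_rfl, Fin.sum_univ_castSucc, Msum_top T y T le_rfl]
  simp

lemma total_mass (T : ℕ) (ν : α → ℝ) (hν1 : ∑ a : α, ν a = 1) :
    ∑ h : Fin T → α, ∏ t : Fin T, ν (h t) = 1 := by
  induction T with
  | zero => simp
  | succ T ih =>
    rw [snoc_sum]
    have : ∀ h : Fin T → α, ∑ x : α, ∏ t : Fin (T+1), ν ((Fin.snoc h x : Fin (T+1) → α) t)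
        = ∏ t : Fin T, ν (h t) := by
      intro h
      simp_rw [prod_snoc, ← Finset.mul_sum, hν1, mul_one]
    simp_rw [this]; exact ih

lemma chernoff_key (ν : α → ℝ) (hν0 : ∀ a, 0 ≤ ν a) (hν1 : ∑ a : α, ν a = 1)
    (y : α → ℝ) (l c B : ℝ) (hl : 0 ≤ l) (hc : 0 ≤ c) (hB : 1 ≤ B)
    (hmgf : ∑ a : α, ν a * exp (l * y a) ≤ B) (T : ℕ) :
    ∑ h : Fin T → α, (if ∃ t ≤ T, c < Msum T y t h then exp (l * c) * ∏ t, ν (h t)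
        else (∏ t, ν (h t)) * exp (l * Msum T y T h)) ≤ B ^ T := by
  induction T with
  | zero =>
    have : ∀ h : Fin 0 → α, ¬ ∃ t ≤ 0, c < Msum 0 y t h := by
      rintro h ⟨t, ht, hlt⟩
      interval_cases t
      simp [Msum] at hlt
      linarith
    simp only [this, if_false, pow_zero]
    simp [Msum]
  | succ T ih =>
    rw [snoc_sum]
    have key : ∀ h : Fin T → α,
        (∑ x : α, (if ∃ t ≤ T+1, c < Msum (T+1) y t (Fin.snoc h x) then
            exp (l * c) * ∏ t, ν ((Fin.snoc h x : Fin (T+1) → α) t)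
          else (∏ t, ν ((Fin.snoc h x : Fin (T+1) → α) t)) * exp (l * Msum (T+1) y (T+1) (Fin.snoc h x))))
        ≤ B * (if ∃ t ≤ T, c < Msum T y t h then exp (l * c) * ∏ t, ν (h t)
            else (∏ t, ν (h t)) * exp (l * Msum T y T h)) := by
      intro h
      set W := ∏ t, ν (h t) with hW
      have hW0 : 0 ≤ W := Finset.prod_nonneg fun t _ => hν0 _
      have hsplit : ∀ x : α, (∃ t ≤ T+1, c < Msum (T+1) y t (Fin.snoc h x)) ↔
          ((∃ t ≤ T, c < Msum T y t h) ∨ c < Msum T y T h + y x) := by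
        intro x
        constructor
        · rintro ⟨t, ht, hlt⟩
          rcases Nat.lt_succ_iff_lt_or_eq.mp (Nat.lt_succ_of_le ht) with h1 | h1
          · left
            exact ⟨t, Nat.lt_succ_iff.mp h1, by
              rwa [Msum_snoc_le T y t (by omega) h x] at hlt⟩
          · right; rw [h1, Msum_snoc_succ] at hlt; exact hlt
        · rintro (⟨t, ht, hlt⟩ | hlt)
          · exact ⟨t, by omega, by rwa [Msum_snoc_le T y t ht h x]⟩
          · exact ⟨T+1, le_rfl, by rwa [Msum_snoc_succ]⟩
      by_cases hP : ∃ t ≤ T, c < Msum T y t h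
      · have : ∀ x : α, (if ∃ t ≤ T+1, c < Msum (T+1) y t (Fin.snoc h x) then
            exp (l * c) * ∏ t, ν ((Fin.snoc h x : Fin (T+1) → α) t)
          else (∏ t, ν ((Fin.snoc h x : Fin (T+1) → α) t)) * exp (l * Msum (T+1) y (T+1) (Fin.snoc h x)))
            = exp (l * c) * (W * ν x) := by
          intro x
          rw [if_pos ((hsplit x).mpr (Or.inl hP)), prod_snoc]
        rw [if_pos hP]
        calc ∑ x : α, _ = ∑ x : α, exp (l * c) * (W * ν x) := Finset.sum_congr rfl fun x _ => this x
          _ = exp (l * c) * W := by rw [← Finset.mul_sum, ← Finset.mul_sum, hν1, mul_one]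
          _ ≤ B * (exp (l * c) * W) := le_mul_of_one_le_left (by positivity) hB
      · rw [if_neg hP]
        set M := Msum T y T h with hM
        have hx_le : ∀ x : α, (if ∃ t ≤ T+1, c < Msum (T+1) y t (Fin.snoc h x) then
            exp (l * c) * ∏ t, ν ((Fin.snoc h x : Fin (T+1) → α) t)
          else (∏ t, ν ((Fin.snoc h x : Fin (T+1) → α) t)) * exp (l * Msum (T+1) y (T+1) (Fin.snoc h x)))
            ≤ (W * ν x) * exp (l * (M + y x)) := by
          intro x
          rw [prod_snoc]
          by_cases hQ : ∃ t ≤ T+1, c < Msum (T+1) y t (Fin.snoc h x)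
          · rw [if_pos hQ]
            have hcross : c < M + y x := ((hsplit x).mp hQ).resolve_left hP
            have : exp (l * c) ≤ exp (l * (M + y x)) :=
              Real.exp_le_exp.mpr (mul_le_mul_of_nonneg_left hcross.le hl)
            calc exp (l * c) * (W * ν x) ≤ exp (l * (M + y x)) * (W * ν x) :=
                  mul_le_mul_of_nonneg_right this (mul_nonneg hW0 (hν0 x))
              _ = (W * ν x) * exp (l * (M + y x)) := by ring
          · rw [if_neg hQ, Msum_snoc_succ]
        calc ∑ x : α, _ ≤ ∑ x : α, (W * ν x) * exp (l * (M + y x)) :=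
              Finset.sum_le_sum fun x _ => hx_le x
          _ = (W * exp (l * M)) * ∑ x : α, ν x * exp (l * y x) := by
              rw [Finset.mul_sum]
              refine Finset.sum_congr rfl fun x _ => ?_
              rw [mul_add, Real.exp_add]; ring
          _ ≤ (W * exp (l * M)) * B := by
              exact mul_le_mul_of_nonneg_left hmgf (by positivity)
          _ = B * (W * exp (l * M)) := by ring
    calc ∑ h : Fin T → α, ∑ x : α, _ ≤ ∑ h : Fin T → α,
          B * (if ∃ t ≤ T, c < Msum T y t h then exp (l * c) * ∏ t, ν (h t)
            else (∏ t, ν (h t)) * exp (l * Msum T y T h)) :=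
          Finset.sum_le_sum fun h _ => key h
      _ = B * ∑ h : Fin T → α, _ := by rw [← Finset.mul_sum]
      _ ≤ B * B ^ T := mul_le_mul_of_nonneg_left ih (by linarith)
      _ = B ^ (T+1) := by ring

lemma chernoff_bad (ν : α → ℝ) (hν0 : ∀ a, 0 ≤ ν a) (hν1 : ∑ a : α, ν a = 1)
    (y : α → ℝ) (l c B : ℝ) (hl : 0 ≤ l) (hc : 0 ≤ c) (hB : 1 ≤ B)
    (hmgf : ∑ a : α, ν a * exp (l * y a) ≤ B) (T : ℕ) :
    ∑ h ∈ Finset.univ.filter (fun h : Fin T → α => ∃ t ≤ T, c < Msum T y t h),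
        ∏ t, ν (h t) ≤ exp (-(l * c)) * B ^ T := by
  have key := chernoff_key ν hν0 hν1 y l c B hl hc hB hmgf T
  have h1 : exp (l * c) * ∑ h ∈ Finset.univ.filter (fun h : Fin T → α => ∃ t ≤ T, c < Msum T y t h),
      ∏ t, ν (h t) ≤ B ^ T := by
    rw [Finset.mul_sum, Finset.sum_filter]
    refine le_trans (Finset.sum_le_sum fun h _ => ?_) key
    split_ifs with hp
    · exact le_rfl
    · have : (0:ℝ) ≤ ∏ t, ν (h t) := Finset.prod_nonneg fun t _ => hν0 _
      positivity
  have hE : (0:ℝ) < exp (l * c) := Real.exp_pos _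
  have h2 : exp (-(l * c)) * B ^ T = B ^ T / exp (l * c) := by
    rw [Real.exp_neg]; ring
  rw [h2, le_div_iff₀ hE, mul_comm]
  exact h1

lemma exp_neg_quad {x : ℝ} (hx : 0 ≤ x) : exp (-x) ≤ 1 - x + x^2/2 := by
  have h3 : 1 + x + x^2/2 + x^3/6 ≤ exp x := by
    have := Real.sum_le_exp_of_nonneg hx 4
    simp [Finset.sum_range_succ, Nat.factorial] at this
    nlinarith [this]
  have hpos : (0:ℝ) < exp x := Real.exp_pos x
  have hinv : exp (-x) * exp x = 1 := by rw [← Real.exp_add]; simp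
  nlinarith [sq_nonneg x, sq_nonneg (x-1), pow_nonneg hx 3, pow_nonneg hx 5,
    mul_pos (Real.exp_pos (-x)) hpos]

lemma mgf_bound (ν : α → ℝ) (hν0 : ∀ a, 0 ≤ ν a)
    (hν1 : ∑ a : α, ν a = 1) (y : α → ℝ) (v : ℝ) (hv1 : v ≤ 1)
    (hyl : ∀ a, v - 1 ≤ y a) (hyu : ∀ a, y a ≤ v) (hmean : ∑ a : α, ν a * y a = 0)
    (l : ℝ) (hl : 0 ≤ l) : ∑ a : α, ν a * exp (l * y a) ≤ exp (l^2/2) := by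
  have chord : ∀ a : α, exp (l * y a) ≤
      (y a - (v-1)) * exp (l*v) + (v - y a) * exp (l*(v-1)) := by
    intro a
    have h1 : exp ((v - y a) • (l*(v-1)) + (y a - (v-1)) • (l*v)) ≤
        (v - y a) * exp (l*(v-1)) + (y a - (v-1)) * exp (l*v) :=
      convexOn_exp.2 (Set.mem_univ _) (Set.mem_univ _)
        (by linarith [hyu a]) (by linarith [hyl a]) (by ring)
    have h2 : (v - y a) • (l*(v-1)) + (y a - (v-1)) • (l*v) = l * y a := by
      simp only [smul_eq_mul]; ring
    rw [h2] at h1; linarith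
  have hsum : ∑ a : α, ν a * exp (l * y a) ≤
      (1 - v) * exp (l*v) + v * exp (l*(v-1)) := by
    calc ∑ a : α, ν a * exp (l * y a)
        ≤ ∑ a : α, ν a * ((y a - (v-1)) * exp (l*v) + (v - y a) * exp (l*(v-1))) :=
          Finset.sum_le_sum fun a _ => mul_le_mul_of_nonneg_left (chord a) (hν0 a)
      _ = (∑ a : α, ν a * (y a - (v-1))) * exp (l*v)
          + (∑ a : α, ν a * (v - y a)) * exp (l*(v-1)) := by
          simp only [mul_add, ← mul_assoc]
          rw [Finset.sum_add_distrib, Finset.sum_mul, Finset.sum_mul]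
      _ = (1 - v) * exp (l*v) + v * exp (l*(v-1)) := by
          have e1 : ∑ a : α, ν a * (y a - (v-1)) = 1 - v := by
            have h : ∀ a : α, ν a * (y a - (v-1)) = ν a * y a - (v-1) * ν a := fun a => by ring
            simp_rw [h]
            rw [Finset.sum_sub_distrib, hmean, ← Finset.mul_sum, hν1]; ring
          have e2 : ∑ a : α, ν a * (v - y a) = v := by
            have h : ∀ a : α, ν a * (v - y a) = v * ν a - ν a * y a := fun a => by ring
            simp_rw [h]
            rw [Finset.sum_sub_distrib, hmean, ← Finset.mul_sum, hν1]; ring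
          rw [e1, e2]
  have step1 : (1 - v) * exp (l*v) + v * exp (l*(v-1)) ≤ exp (l*v) * exp (-(v * (1 - exp (-l)))) := by
    have : (1 - v) * exp (l*v) + v * exp (l*(v-1)) = exp (l*v) * (1 + -(v * (1 - exp (-l)))) := by
      rw [show l*(v-1) = l*v + (-l) by ring, Real.exp_add]
      ring
    rw [this]
    refine mul_le_mul_of_nonneg_left ?_ (Real.exp_nonneg _)
    linarith [Real.add_one_le_exp (-(v * (1 - exp (-l))))]
  have step2 : exp (l*v) * exp (-(v * (1 - exp (-l)))) ≤ exp (l^2/2) := by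
    rw [← Real.exp_add]
    apply Real.exp_le_exp.mpr
    have hq : exp (-l) ≤ 1 - l + l^2/2 := exp_neg_quad hl
    have hnn : 0 ≤ l - 1 + exp (-l) := by linarith [Real.add_one_le_exp (-l)]
    have h1 : l*v + -(v * (1 - exp (-l))) = v * (l - 1 + exp (-l)) := by ring
    rw [h1]
    calc v * (l - 1 + exp (-l)) ≤ 1 * (l - 1 + exp (-l)) :=
          mul_le_mul_of_nonneg_right hv1 hnn
      _ ≤ l^2/2 := by linarith
  linarith

end AuxRegret

open scoped Classical in
/-- Under i.i.d. play of a Nash equilibrium `(σ1, σ2)` of the bi-matrix stage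
game with payoff matrices `G1` (player 1) and `G2` (player 2), with probability at least
`1 - δ`, simultaneously for every `t ≤ T`, both players' expected external regrets
(benchmark action evaluated against the opponent's fixed mixed strategy) stay below
`√(2 T ln(2/δ))`. -/
theorem iid_nash_expected_regret_bound
    (N T : ℕ) (hN : 2 ≤ N) (hT : 0 < T)
    (G1 G2 : Fin N → Fin N → ℝ)
    (hG1 : ∀ a b, G1 a b ∈ Set.Icc (0 : ℝ) 1) (hG2 : ∀ a b, G2 a b ∈ Set.Icc (0 : ℝ) 1)
    (σ1 σ2 : Fin N → ℝ)
    (hσ1 : (∀ i, 0 ≤ σ1 i) ∧ ∑ i, σ1 i = 1) (hσ2 : (∀ i, 0 ≤ σ2 i) ∧ ∑ i, σ2 i = 1)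
    -- (σ1, σ2) is a Nash equilibrium:
    (hNash1 : ∀ σ : Fin N → ℝ, (∀ i, 0 ≤ σ i) → ∑ i, σ i = 1 →
      ∑ i, ∑ j, σ i * G1 i j * σ2 j ≤ ∑ i, ∑ j, σ1 i * G1 i j * σ2 j)
    (hNash2 : ∀ σ : Fin N → ℝ, (∀ i, 0 ≤ σ i) → ∑ i, σ i = 1 →
      ∑ i, ∑ j, σ i * G2 i j * σ1 j ≤ ∑ i, ∑ j, σ2 i * G2 i j * σ1 j)
    (δ : ℝ) (hδ : δ ∈ Set.Ioo (0 : ℝ) 1) :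
    1 - δ ≤
      ∑ h ∈ Finset.univ.filter (fun h : Fin T → Fin N × Fin N =>
        ∀ t ≤ T, ∀ a : Fin N,
          -- player 1's expected external regret over the first t stages
          (∑ r : Fin T, if (r : ℕ) < t then
              ((∑ j, G1 a j * σ2 j) - ∑ i, σ1 i * G1 i (h r).2) else 0)
            ≤ Real.sqrt (2 * T * Real.log (2 / δ)) ∧
          -- player 2's expected external regret over the first t stages
          (∑ r : Fin T, if (r : ℕ) < t then
              ((∑ j, G2 a j * σ1 j) - ∑ i, σ2 i * G2 i (h r).1) else 0)
            ≤ Real.sqrt (2 * T * Real.log (2 / δ))),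
        ∏ t : Fin T, σ1 (h t).1 * σ2 (h t).2 := by
  classical
  obtain ⟨hσ1n, hσ1s⟩ := hσ1
  obtain ⟨hσ2n, hσ2s⟩ := hσ2
  obtain ⟨hδ0, hδ1⟩ := hδ
  have hTpos : (0:ℝ) < T := by exact_mod_cast hT
  have hL : 0 < Real.log (2 / δ) := Real.log_pos (by rw [lt_div_iff₀ hδ0]; linarith)
  set c := Real.sqrt (2 * T * Real.log (2 / δ)) with hc_def
  have hc : 0 ≤ c := Real.sqrt_nonneg _
  have hcsq : c^2 = 2 * T * Real.log (2 / δ) := Real.sq_sqrt (by positivity)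
  set l := c / T with hl_def
  have hl : 0 ≤ l := div_nonneg hc hTpos.le
  -- the step distribution
  have hν0 : ∀ p : Fin N × Fin N, 0 ≤ σ1 p.1 * σ2 p.2 := fun p => mul_nonneg (hσ1n _) (hσ2n _)
  have hν1 : ∑ p : Fin N × Fin N, σ1 p.1 * σ2 p.2 = 1 := by
    rw [Fintype.sum_prod_type]
    simp_rw [← Finset.mul_sum, hσ2s, mul_one]
    exact hσ1s
  -- realized-payoff bounds
  have hC1 : ∀ b, 0 ≤ (∑ i, σ1 i * G1 i b) ∧ (∑ i, σ1 i * G1 i b) ≤ 1 := by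
    intro b
    refine ⟨Finset.sum_nonneg fun i _ => mul_nonneg (hσ1n i) (hG1 i b).1, ?_⟩
    calc ∑ i, σ1 i * G1 i b ≤ ∑ i, σ1 i :=
          Finset.sum_le_sum fun i _ => mul_le_of_le_one_right (hσ1n i) (hG1 i b).2
      _ = 1 := hσ1s
  have hC2 : ∀ b, 0 ≤ (∑ i, σ2 i * G2 i b) ∧ (∑ i, σ2 i * G2 i b) ≤ 1 := by
    intro b
    refine ⟨Finset.sum_nonneg fun i _ => mul_nonneg (hσ2n i) (hG2 i b).1, ?_⟩
    calc ∑ i, σ2 i * G2 i b ≤ ∑ i, σ2 i :=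
          Finset.sum_le_sum fun i _ => mul_le_of_le_one_right (hσ2n i) (hG2 i b).2
      _ = 1 := hσ2s
  -- equilibrium values
  set V1 := ∑ i, ∑ j, σ1 i * G1 i j * σ2 j with hV1def
  set V2 := ∑ i, ∑ j, σ2 i * G2 i j * σ1 j with hV2def
  have hV1alt : V1 = ∑ j, σ2 j * (∑ i, σ1 i * G1 i j) := by
    rw [hV1def, Finset.sum_comm]
    refine Finset.sum_congr rfl fun j _ => ?_
    rw [Finset.mul_sum]
    exact Finset.sum_congr rfl fun i _ => by ring
  have hV2alt : V2 = ∑ j, σ1 j * (∑ i, σ2 i * G2 i j) := by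
    rw [hV2def, Finset.sum_comm]
    refine Finset.sum_congr rfl fun j _ => ?_
    rw [Finset.mul_sum]
    exact Finset.sum_congr rfl fun i _ => by ring
  have hV1u : V1 ≤ 1 := by
    rw [hV1alt]
    calc ∑ j, σ2 j * (∑ i, σ1 i * G1 i j) ≤ ∑ j, σ2 j :=
          Finset.sum_le_sum fun j _ => mul_le_of_le_one_right (hσ2n j) (hC1 j).2
      _ = 1 := hσ2s
  have hV2u : V2 ≤ 1 := by
    rw [hV2alt]
    calc ∑ j, σ1 j * (∑ i, σ2 i * G2 i j) ≤ ∑ j, σ1 j :=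
          Finset.sum_le_sum fun j _ => mul_le_of_le_one_right (hσ1n j) (hC2 j).2
      _ = 1 := hσ1s
  -- centered one-step variables
  set y1 : Fin N × Fin N → ℝ := fun p => V1 - ∑ i, σ1 i * G1 i p.2 with hy1def
  set y2 : Fin N × Fin N → ℝ := fun p => V2 - ∑ i, σ2 i * G2 i p.1 with hy2def
  have hmean1 : ∑ p : Fin N × Fin N, (σ1 p.1 * σ2 p.2) * y1 p = 0 := by
    rw [Fintype.sum_prod_type]
    have step : ∀ b : Fin N, ∑ j, (σ1 b * σ2 j) * y1 (b, j)
        = σ1 b * ∑ j, σ2 j * (V1 - ∑ i, σ1 i * G1 i j) := by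
      intro b
      rw [Finset.mul_sum]
      refine Finset.sum_congr rfl fun j _ => ?_
      rw [hy1def]; ring
    simp_rw [step]
    rw [← Finset.sum_mul, hσ1s, one_mul]
    simp_rw [mul_sub]
    rw [Finset.sum_sub_distrib, ← Finset.sum_mul, hσ2s, one_mul, ← hV1alt, sub_self]
  have hmean2 : ∑ p : Fin N × Fin N, (σ1 p.1 * σ2 p.2) * y2 p = 0 := by
    rw [Fintype.sum_prod_type]
    have step : ∀ b : Fin N, ∑ j, (σ1 b * σ2 j) * y2 (b, j)
        = σ1 b * (V2 - ∑ i, σ2 i * G2 i b) := by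
      intro b
      have h : ∀ j, (σ1 b * σ2 j) * y2 (b, j) = σ2 j * (σ1 b * (V2 - ∑ i, σ2 i * G2 i b)) := by
        intro j; rw [hy2def]; ring
      simp_rw [h]
      rw [← Finset.sum_mul, hσ2s, one_mul]
    simp_rw [step, mul_sub]
    rw [Finset.sum_sub_distrib, ← Finset.sum_mul, hσ1s, one_mul, ← hV2alt, sub_self]
  -- Nash domination: any fixed action does not beat the equilibrium value
  have hdom1 : ∀ a : Fin N, (∑ j, G1 a j * σ2 j) ≤ V1 := by
    intro a
    have h := hNash1 (fun i => if i = a then 1 else 0)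
      (fun i => by split_ifs <;> norm_num)
      (by simp [Finset.sum_ite_eq'])
    have key : ∑ i, ∑ j, (if i = a then (1:ℝ) else 0) * G1 i j * σ2 j
        = ∑ j, G1 a j * σ2 j := by
      rw [Finset.sum_eq_single a (fun i _ hne => by simp [hne]) (by simp)]
      simp
    rw [← key]
    exact h
  have hdom2 : ∀ a : Fin N, (∑ j, G2 a j * σ1 j) ≤ V2 := by
    intro a
    have h := hNash2 (fun i => if i = a then 1 else 0)
      (fun i => by split_ifs <;> norm_num)
      (by simp [Finset.sum_ite_eq'])
    have key : ∑ i, ∑ j, (if i = a then (1:ℝ) else 0) * G2 i j * σ1 j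
        = ∑ j, G2 a j * σ1 j := by
      rw [Finset.sum_eq_single a (fun i _ hne => by simp [hne]) (by simp)]
      simp
    rw [← key]
    exact h
  -- moment generating function bounds
  have hmgf1 : ∑ p : Fin N × Fin N, (σ1 p.1 * σ2 p.2) * exp (l * y1 p) ≤ exp (l^2/2) :=
    mgf_bound _ hν0 hν1 y1 V1 hV1u
      (fun p => by rw [hy1def]; simp only; linarith [(hC1 p.2).2])
      (fun p => by rw [hy1def]; simp only; linarith [(hC1 p.2).1]) hmean1 l hl
  have hmgf2 : ∑ p : Fin N × Fin N, (σ1 p.1 * σ2 p.2) * exp (l * y2 p) ≤ exp (l^2/2) :=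
    mgf_bound _ hν0 hν1 y2 V2 hV2u
      (fun p => by rw [hy2def]; simp only; linarith [(hC2 p.1).2])
      (fun p => by rw [hy2def]; simp only; linarith [(hC2 p.1).1]) hmean2 l hl
  -- the Chernoff bound value equals δ/2
  have hhalf : exp (-(l * c)) * (exp (l^2/2))^T = δ / 2 := by
    rw [← Real.exp_nat_mul, ← Real.exp_add]
    have hT0 : (T:ℝ) ≠ 0 := ne_of_gt hTpos
    have harg : -(l * c) + (T:ℝ) * (l^2/2) = - Real.log (2/δ) := by
      rw [hl_def]
      field_simp
      nlinarith [hcsq]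
    rw [harg, Real.exp_neg, Real.exp_log (by positivity), inv_div]
  have hB1 : (1:ℝ) ≤ exp (l^2/2) := Real.one_le_exp (by positivity)
  have hbad1 : ∑ h ∈ Finset.univ.filter
      (fun h : Fin T → Fin N × Fin N => ∃ t ≤ T, c < Msum T y1 t h),
      (∏ t : Fin T, σ1 (h t).1 * σ2 (h t).2) ≤ δ / 2 :=
    le_trans (chernoff_bad _ hν0 hν1 y1 l c _ hl hc hB1 hmgf1 T) (le_of_eq hhalf)
  have hbad2 : ∑ h ∈ Finset.univ.filter
      (fun h : Fin T → Fin N × Fin N => ∃ t ≤ T, c < Msum T y2 t h),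
      (∏ t : Fin T, σ1 (h t).1 * σ2 (h t).2) ≤ δ / 2 :=
    le_trans (chernoff_bad _ hν0 hν1 y2 l c _ hl hc hB1 hmgf2 T) (le_of_eq hhalf)
  -- reduction of the regret event to the two Chernoff events
  have main : ∀ F : Finset (Fin T → Fin N × Fin N),
      (∀ h, h ∉ F → (∃ t ≤ T, c < Msum T y1 t h) ∨ (∃ t ≤ T, c < Msum T y2 t h)) →
      1 - δ ≤ ∑ h ∈ F, ∏ t : Fin T, σ1 (h t).1 * σ2 (h t).2 := by
    intro F hP
    have htot : (∑ h ∈ F, ∏ t : Fin T, σ1 (h t).1 * σ2 (h t).2)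
        + (∑ h ∈ Fᶜ, ∏ t : Fin T, σ1 (h t).1 * σ2 (h t).2) = 1 := by
      rw [Finset.sum_add_sum_compl]
      exact total_mass T (fun p : Fin N × Fin N => σ1 p.1 * σ2 p.2) hν1
    have hWn : ∀ h : Fin T → Fin N × Fin N, 0 ≤ ∏ t : Fin T, σ1 (h t).1 * σ2 (h t).2 :=
      fun h => Finset.prod_nonneg fun t _ => hν0 (h t)
    have hb : ∑ h ∈ Fᶜ, (∏ t : Fin T, σ1 (h t).1 * σ2 (h t).2) ≤ δ := by
      have hsub : Fᶜ ⊆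
          Finset.univ.filter (fun h : Fin T → Fin N × Fin N => ∃ t ≤ T, c < Msum T y1 t h) ∪
          Finset.univ.filter (fun h : Fin T → Fin N × Fin N => ∃ t ≤ T, c < Msum T y2 t h) := by
        intro h hh
        rw [Finset.mem_compl] at hh
        simp only [Finset.mem_union, Finset.mem_filter, Finset.mem_univ, true_and]
        exact hP h hh
      have hunion := Finset.sum_union_inter
        (s₁ := Finset.univ.filter (fun h : Fin T → Fin N × Fin N => ∃ t ≤ T, c < Msum T y1 t h))
        (s₂ := Finset.univ.filter (fun h : Fin T → Fin N × Fin N => ∃ t ≤ T, c < Msum T y2 t h))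
        (f := fun h => ∏ t : Fin T, σ1 (h t).1 * σ2 (h t).2)
      have hint : 0 ≤ ∑ h ∈ (Finset.univ.filter
            (fun h : Fin T → Fin N × Fin N => ∃ t ≤ T, c < Msum T y1 t h) ∩
          Finset.univ.filter (fun h : Fin T → Fin N × Fin N => ∃ t ≤ T, c < Msum T y2 t h)),
          ∏ t : Fin T, σ1 (h t).1 * σ2 (h t).2 :=
        Finset.sum_nonneg fun h _ => hWn h
      have h1 := Finset.sum_le_sum_of_subset_of_nonneg hsub (fun h _ _ => hWn h)
      linarith [hbad1, hbad2]
    linarith [htot, hb]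
  refine main _ ?_
  intro h hh
  simp only [Finset.mem_filter, Finset.mem_univ, true_and] at hh
  push_neg at hh
  obtain ⟨t, ht, a, hfail⟩ := hh
  by_cases hA : (∑ r : Fin T, if (r : ℕ) < t then
      ((∑ j, G1 a j * σ2 j) - ∑ i, σ1 i * G1 i (h r).2) else 0) ≤ c
  · right
    refine ⟨t, ht, ?_⟩
    have h2 := hfail hA
    have hle : (∑ r : Fin T, if (r : ℕ) < t then
        ((∑ j, G2 a j * σ1 j) - ∑ i, σ2 i * G2 i (h r).1) else 0) ≤ Msum T y2 t h := by
      unfold Msum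
      refine Finset.sum_le_sum fun r _ => ?_
      split_ifs
      · rw [hy2def]; exact sub_le_sub_right (hdom2 a) _
      · exact le_rfl
    linarith
  · left
    refine ⟨t, ht, ?_⟩
    have h2 := lt_of_not_ge hA
    have hle : (∑ r : Fin T, if (r : ℕ) < t then
        ((∑ j, G1 a j * σ2 j) - ∑ i, σ1 i * G1 i (h r).2) else 0) ≤ Msum T y1 t h := by
      unfold Msum
      refine Finset.sum_le_sum fun r _ => ?_
      split_ifs
      · rw [hy1def]; exact sub_le_sub_right (hdom1 a) _
      · exact le_rfl
    linarith
end

section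
/- Let C be a finite set of type-dependent behavioral strategies and ρ a probability distribution on C. Then there exists a single type-dependent behavioral strategy π̄ such that for every own type θ, every partner type θ', and every partner behavioral strategy π', the play-path distribution over length-T histories induced by (π̄ with type θ, π' with type θ') equals the ρ-mixture ∑_{π∈C} ρ(π) · p_{π,π'}, where p_{π,π'} is the play-path distribution induced by (π with type θ, π' with type θ'). That is, playing against a partner sampled once from ρ at the start of the episode is equivalent in distribution to playing against the single strategy π̄. -/
open Finset

section Mix
open scoped Classical
set_option linter.unusedSectionVars false

variable {N T : ℕ} {Θ ι : Type} [Fintype ι]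

noncomputable def mixG (C : ι → Θ → List (Fin N × Fin N) → Fin N → ℝ)
    (d : Fin N × Fin N) (c : ι) (θ : Θ) (l : List (Fin N × Fin N)) : ℝ :=
  ∏ i ∈ Finset.range l.length, C c θ (l.take i) (l.getD i d).1

lemma mixG_append (C : ι → Θ → List (Fin N × Fin N) → Fin N → ℝ)
    (d : Fin N × Fin N) (c : ι) (θ : Θ) (l : List (Fin N × Fin N)) (x : Fin N × Fin N) :
    mixG C d c θ (l ++ [x]) = mixG C d c θ l * C c θ l x.1 := by
  unfold mixG
  rw [List.length_append, List.length_singleton, prod_range_succ]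
  congr 1
  · apply Finset.prod_congr rfl
    intro i hi
    rw [Finset.mem_range] at hi
    rw [List.take_append_of_le_length (le_of_lt hi), List.getD_append _ _ _ _ hi]
  · rw [List.take_left, List.getD_append_right _ _ _ _ le_rfl]
    simp

lemma mixG_nonneg (C : ι → Θ → List (Fin N × Fin N) → Fin N → ℝ)
    (hC : ∀ c θ l, l.length < T → (∀ a, 0 ≤ C c θ l a) ∧ ∑ a, C c θ l a = 1)
    (d : Fin N × Fin N) (c : ι) (θ : Θ) (l : List (Fin N × Fin N)) (hl : l.length ≤ T) :
    0 ≤ mixG C d c θ l := by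
  apply Finset.prod_nonneg
  intro i hi
  rw [Finset.mem_range] at hi
  exact (hC c θ (l.take i) (by rw [List.length_take]; omega)).1 _

noncomputable def mixW (C : ι → Θ → List (Fin N × Fin N) → Fin N → ℝ) (ρ : ι → ℝ)
    (d : Fin N × Fin N) (θ : Θ) (l : List (Fin N × Fin N)) : ℝ :=
  ∑ c, ρ c * mixG C d c θ l

noncomputable def mixPbar (C : ι → Θ → List (Fin N × Fin N) → Fin N → ℝ) (ρ : ι → ℝ)
    (d : Fin N × Fin N) (θ : Θ) (l : List (Fin N × Fin N)) (a : Fin N) : ℝ :=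
  if mixW C ρ d θ l = 0 then (N : ℝ)⁻¹
  else (∑ c, ρ c * mixG C d c θ l * C c θ l a) / mixW C ρ d θ l

lemma mixW_nonneg (C : ι → Θ → List (Fin N × Fin N) → Fin N → ℝ) (ρ : ι → ℝ)
    (hC : ∀ c θ l, l.length < T → (∀ a, 0 ≤ C c θ l a) ∧ ∑ a, C c θ l a = 1)
    (hρ0 : ∀ c, 0 ≤ ρ c)
    (d : Fin N × Fin N) (θ : Θ) (l : List (Fin N × Fin N)) (hl : l.length ≤ T) :
    0 ≤ mixW C ρ d θ l :=
  Finset.sum_nonneg fun c _ => mul_nonneg (hρ0 c) (mixG_nonneg C hC d c θ l hl)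

lemma mixW_append (C : ι → Θ → List (Fin N × Fin N) → Fin N → ℝ) (ρ : ι → ℝ)
    (d : Fin N × Fin N) (θ : Θ) (l : List (Fin N × Fin N)) (x : Fin N × Fin N) :
    mixW C ρ d θ (l ++ [x]) = ∑ c, ρ c * mixG C d c θ l * C c θ l x.1 := by
  unfold mixW
  exact Finset.sum_congr rfl fun c _ => by rw [mixG_append, mul_assoc]

lemma mixW_zero_append (C : ι → Θ → List (Fin N × Fin N) → Fin N → ℝ) (ρ : ι → ℝ)
    (hC : ∀ c θ l, l.length < T → (∀ a, 0 ≤ C c θ l a) ∧ ∑ a, C c θ l a = 1)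
    (hρ0 : ∀ c, 0 ≤ ρ c)
    (d : Fin N × Fin N) (θ : Θ) (l : List (Fin N × Fin N)) (hl : l.length ≤ T)
    (x : Fin N × Fin N) (h0 : mixW C ρ d θ l = 0) :
    mixW C ρ d θ (l ++ [x]) = 0 := by
  rw [mixW_append]
  apply Finset.sum_eq_zero
  intro c _
  have := (Finset.sum_eq_zero_iff_of_nonneg
    (fun c _ => mul_nonneg (hρ0 c) (mixG_nonneg C hC d c θ l hl))).mp h0 c (Finset.mem_univ c)
  rw [this, zero_mul]

lemma mix_telescope (C : ι → Θ → List (Fin N × Fin N) → Fin N → ℝ) (ρ : ι → ℝ)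
    (hC : ∀ c θ l, l.length < T → (∀ a, 0 ≤ C c θ l a) ∧ ∑ a, C c θ l a = 1)
    (hρ0 : ∀ c, 0 ≤ ρ c) (hρ1 : ∑ c, ρ c = 1)
    (d : Fin N × Fin N) (θ : Θ) (L : List (Fin N × Fin N)) (hL : L.length = T)
    (k : ℕ) (hk : k ≤ T) :
    ∏ i ∈ Finset.range k, mixPbar C ρ d θ (L.take i) (L.getD i d).1
      = mixW C ρ d θ (L.take k) := by
  induction k with
  | zero =>
    simp [mixW, mixG]
    exact hρ1.symm
  | succ k ih =>
    have hkT : k < T := hk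
    have hlen : (L.take k).length = k := by rw [List.length_take]; omega
    have htake : L.take (k + 1) = L.take k ++ [L.getD k d] := by
      rw [List.take_succ]
      congr 1
      have hkL : k < L.length := by omega
      rw [List.getElem?_eq_getElem hkL, List.getD_eq_getElem _ _ hkL]
      rfl
    rw [prod_range_succ, ih (le_of_lt hkT), htake]
    by_cases h0 : mixW C ρ d θ (L.take k) = 0
    · rw [mixW_zero_append C ρ hC hρ0 d θ _ (by omega) _ h0, h0, zero_mul]
    · rw [mixPbar, if_neg h0, mixW_append,
        mul_div_cancel₀ _ h0]

end Mix

/-- For a finite set `C` (indexed by `ι`) of type-dependent behavioral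
strategies and a distribution `ρ` on it, there is a single type-dependent behavioral
strategy `Pbar` such that, against every partner type and every partner behavioral
strategy, the induced play-path distribution over length-`T` histories equals the
`ρ`-mixture of the play-path distributions induced by the members of `C`. -/
theorem mixture_of_population_is_single_strategy
    (N T : ℕ) (hN : 2 ≤ N) (hT : 0 < T)
    (Θ : Type) [Fintype Θ]
    (ι : Type) [Fintype ι] [Nonempty ι]
    -- the finite set C of type-dependent behavioral strategies
    (C : ι → Θ → List (Fin N × Fin N) → Fin N → ℝ)
    (hC : ∀ c θ l, l.length < T → (∀ a, 0 ≤ C c θ l a) ∧ ∑ a, C c θ l a = 1)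
    -- the distribution ρ over C
    (ρ : ι → ℝ) (hρ0 : ∀ c, 0 ≤ ρ c) (hρ1 : ∑ c, ρ c = 1) :
    ∃ Pbar : Θ → List (Fin N × Fin N) → Fin N → ℝ,
      (∀ θ l, l.length < T → (∀ a, 0 ≤ Pbar θ l a) ∧ ∑ a, Pbar θ l a = 1) ∧
      ∀ (θ θ' : Θ) (Q : Θ → List (Fin N × Fin N) → Fin N → ℝ),
        (∀ θ'' l, l.length < T → (∀ a, 0 ≤ Q θ'' l a) ∧ ∑ a, Q θ'' l a = 1) →
        ∀ h : Fin T → Fin N × Fin N,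
          (∏ t : Fin T,
            Pbar θ ((List.ofFn h).take t) (h t).1 *
            Q θ' (((List.ofFn h).take t).map Prod.swap) (h t).2)
          =
          ∑ c, ρ c *
            ∏ t : Fin T,
              C c θ ((List.ofFn h).take t) (h t).1 *
              Q θ' (((List.ofFn h).take t).map Prod.swap) (h t).2 := by
  have hN0 : (0 : ℕ) < N := by omega
  set d : Fin N × Fin N := (⟨0, hN0⟩, ⟨0, hN0⟩) with hd
  refine ⟨mixPbar C ρ d, ?_, ?_⟩
  · intro θ l hl
    constructor
    · intro a
      rw [mixPbar]
      split_ifs with h0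
      · positivity
      · apply div_nonneg
        · exact Finset.sum_nonneg fun c _ => mul_nonneg
            (mul_nonneg (hρ0 c) (mixG_nonneg C hC d c θ l (le_of_lt hl)))
            ((hC c θ l hl).1 a)
        · exact mixW_nonneg C ρ hC hρ0 d θ l (le_of_lt hl)
    · unfold mixPbar
      split_ifs with h0
      · rw [Finset.sum_const, Finset.card_univ, Fintype.card_fin, nsmul_eq_mul,
          mul_inv_cancel₀ (by positivity : (N:ℝ) ≠ 0)]
      · rw [← Finset.sum_div, div_eq_one_iff_eq h0]
        rw [Finset.sum_comm]
        unfold mixW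
        apply Finset.sum_congr rfl
        intro c _
        rw [← Finset.mul_sum, (hC c θ l hl).2, mul_one]
  · intro θ θ' Q hQ h
    have hL : (List.ofFn h).length = T := by simp
    have hget : ∀ t : Fin T, (List.ofFn h).getD (t : ℕ) d = h t := by
      intro t
      rw [List.getD_eq_getElem _ _ (by simp)]
      simp
    have h1 : (∏ t : Fin T, mixPbar C ρ d θ ((List.ofFn h).take (t : ℕ)) (h t).1)
        = mixW C ρ d θ (List.ofFn h) := by
      have key := mix_telescope C ρ hC hρ0 hρ1 d θ (List.ofFn h) hL T le_rfl
      rw [List.take_of_length_le (le_of_eq hL)] at key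
      rw [← key, ← Fin.prod_univ_eq_prod_range]
      exact Finset.prod_congr rfl fun t _ => by rw [hget t]
    have h2 : ∀ c, (∏ t : Fin T, C c θ ((List.ofFn h).take (t : ℕ)) (h t).1)
        = mixG C d c θ (List.ofFn h) := by
      intro c
      unfold mixG
      rw [hL, ← Fin.prod_univ_eq_prod_range]
      exact Finset.prod_congr rfl fun t _ => by rw [hget t]
    rw [Finset.prod_mul_distrib, h1]
    unfold mixW
    rw [Finset.sum_mul]
    apply Finset.sum_congr rfl
    intro c _
    rw [Finset.prod_mul_distrib, h2 c]
    ring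
end
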